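/- Let T > 0, let φ : [0,T] → ℝ be continuous with φ(0) = 0, and for 0 ≤ x < 1 set K₁(x) = (π/(4T)) ∫₀^π ∫₀^π |φ(Ts/π) − φ(Tt/π)|² · P₂(x, s+t) ds dt, where P₂(x,s) = (2/π)·x(1−x)(1−x²)·[cos s/(1−2x cos s+x²)² − 4x sin² s/(1−2x cos s+x²)³]. Then lim_{x→1⁻} K₁(x) = 0. -/

import Mathlib

/-!
Put `a = 1 - x`. For `|u| ≤ π` the bound `1 - cos u ≥ 2u²/π²` makes the denominator of `P₂(x,u)`
comparable to `a² + u²`, so `|P₂(x,u)| ≲ (a/(a² + u²))²`. By `2π`-periodicity, on the square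
`[0,π]²` the kernel `P₂(x, s+t)` therefore concentrates at the corners `(0,0)` and `(π,π)`, where
the integrand `(φ(Ts/π) - φ(Tt/π))²` vanishes. Near the corners the squared Lorentzian in `s + t`
is dominated by a product of Lorentzians in `s` and in `t`, each of mass at most `π/2`, so that
part of the integral is controlled by the size of the integrand there; away from the corners the
kernel is `O(a²)`.
-/

open MeasureTheory Filter Topology Real intervalIntegral

noncomputable section

/-- The kernel `P₂(x,s) = ∂_s P₁(x,s)`, where `P₁(x,s) = -(1-x) ∂_s P₀(x,s)` and `P₀` is the
Poisson kernel, extended to `s ∈ [0, 2π]` by the same formula. -/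
def P2 (x s : ℝ) : ℝ :=
  (2 / π) * (x * (1 - x) * (1 - x ^ 2)) *
    (Real.cos s / (1 - 2 * x * Real.cos s + x ^ 2) ^ 2 -
      4 * x * Real.sin s ^ 2 / (1 - 2 * x * Real.cos s + x ^ 2) ^ 3)

lemma P2_denom_pos {x : ℝ} (hx : |x| < 1) (u : ℝ) : 0 < 1 - 2 * x * cos u + x ^ 2 := by
  have hxcos : x * cos u ≤ |x| := by
    calc x * cos u ≤ |x * cos u| := le_abs_self _
      _ = |x| * |cos u| := abs_mul _ _
      _ ≤ |x| := mul_le_of_le_one_right (abs_nonneg x) (abs_cos_le_one u)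
  nlinarith [sq_abs x, abs_nonneg x]

lemma continuous_P2 {x : ℝ} (hx : |x| < 1) : Continuous (P2 x) := by
  have hD : ∀ u, 1 - 2 * x * cos u + x ^ 2 ≠ 0 := fun u => (P2_denom_pos hx u).ne'
  unfold P2
  fun_prop (disch := intro u; exact pow_ne_zero _ (hD u))

lemma P2_sub_two_pi (x u : ℝ) : P2 x (u - 2 * π) = P2 x u := by
  simp only [P2, cos_sub_two_pi, sin_sub_two_pi]

lemma two_div_pi_sq_mul_le_P2_denom {x u : ℝ} (hx : 1 / 2 ≤ x) (hu : |u| ≤ π) :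
    2 / π ^ 2 * ((1 - x) ^ 2 + u ^ 2) ≤ 1 - 2 * x * cos u + x ^ 2 := by
  have hπ2 : 2 ≤ π ^ 2 := by nlinarith [pi_gt_three]
  have hk : 2 / π ^ 2 ≤ 1 := (div_le_one (by positivity)).2 hπ2
  have hcos : 2 / π ^ 2 * u ^ 2 ≤ 1 - cos u := by linarith [cos_le_one_sub_mul_cos_sq hu]
  calc 2 / π ^ 2 * ((1 - x) ^ 2 + u ^ 2) ≤ (1 - x) ^ 2 + 2 / π ^ 2 * u ^ 2 := by
        nlinarith [mul_le_mul_of_nonneg_right hk (sq_nonneg (1 - x))]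
    _ ≤ (1 - x) ^ 2 + 2 * x * (1 - cos u) := by nlinarith [cos_le_one u]
    _ = 1 - 2 * x * cos u + x ^ 2 := by ring

def lorentzian (a r : ℝ) : ℝ := a / (a ^ 2 + r ^ 2)

lemma abs_P2_le {x u : ℝ} (hx : 1 / 2 ≤ x) (hx1 : x < 1) (hu : |u| ≤ π) :
    |P2 x u| ≤ (π ^ 3 + 2 * π ^ 5) * lorentzian (1 - x) u ^ 2 := by
  set a := 1 - x
  set Q := a ^ 2 + u ^ 2
  set D := 1 - 2 * x * cos u + x ^ 2
  have hQ : 0 < Q := by positivity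
  have hDQ : 2 / π ^ 2 * Q ≤ D := two_div_pi_sq_mul_le_P2_denom hx hu
  have hkQ : 0 < 2 / π ^ 2 * Q := by positivity
  have hD : 0 < D := hkQ.trans_le hDQ
  have hsin : 4 * x * sin u ^ 2 ≤ 4 * Q := by
    nlinarith [sin_sq_le_sq (x := u), sq_nonneg (sin u), sq_nonneg a]
  have hbracket : |cos u / D ^ 2 - 4 * x * sin u ^ 2 / D ^ 3|
      ≤ 1 / (2 / π ^ 2 * Q) ^ 2 + 4 * Q / (2 / π ^ 2 * Q) ^ 3 := by
    refine (abs_sub _ _).trans (add_le_add ?_ ?_)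
    · rw [abs_div, abs_of_pos (pow_pos hD 2)]
      gcongr
      exact abs_cos_le_one u
    · rw [abs_of_nonneg (by positivity)]
      gcongr
  have hcoef0 : 0 ≤ x * a * (1 - x ^ 2) := by
    have : 0 ≤ a := by linarith
    have : 0 ≤ 1 - x ^ 2 := by nlinarith
    positivity
  have hcoef : x * a * (1 - x ^ 2) ≤ 2 * a ^ 2 := by
    have h : x * (1 + x) ≤ 2 := by nlinarith
    calc x * a * (1 - x ^ 2) = a ^ 2 * (x * (1 + x)) := by ring
      _ ≤ a ^ 2 * 2 := mul_le_mul_of_nonneg_left h (sq_nonneg a)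
      _ = 2 * a ^ 2 := by ring
  have hP2 : P2 x u = 2 / π * (x * a * (1 - x ^ 2)) *
      (cos u / D ^ 2 - 4 * x * sin u ^ 2 / D ^ 3) := rfl
  have hL : lorentzian a u = a / Q := rfl
  clear_value a Q D
  calc |P2 x u| = 2 / π * (x * a * (1 - x ^ 2)) * |cos u / D ^ 2 - 4 * x * sin u ^ 2 / D ^ 3| := by
        rw [hP2, abs_mul, abs_of_nonneg (mul_nonneg (by positivity) hcoef0)]
    _ ≤ 2 / π * (2 * a ^ 2) * (1 / (2 / π ^ 2 * Q) ^ 2 + 4 * Q / (2 / π ^ 2 * Q) ^ 3) := by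
        gcongr
    _ = (π ^ 3 + 2 * π ^ 5) * lorentzian a u ^ 2 := by
        rw [hL]
        field_simp
        ring

lemma lorentzian_nonneg {a : ℝ} (ha : 0 ≤ a) (r : ℝ) : 0 ≤ lorentzian a r := by
  unfold lorentzian; positivity

lemma continuous_lorentzian {a : ℝ} (ha : a ≠ 0) : Continuous (lorentzian a) :=
  continuous_const.div (by fun_prop) fun r => by positivity

lemma lorentzian_neg (a r : ℝ) : lorentzian a (-r) = lorentzian a r := by
  simp only [lorentzian, neg_sq]

lemma lorentzian_le_of_abs_le {a r r' : ℝ} (ha : 0 < a) (h : |r| ≤ |r'|) :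
    lorentzian a r' ≤ lorentzian a r :=
  div_le_div_of_nonneg_left ha.le (by positivity) (by linarith [sq_le_sq.2 h])

lemma lorentzian_le_of_le_abs {a r δ : ℝ} (ha : 0 < a) (hδ : 0 < δ) (h : δ ≤ |r|) :
    lorentzian a r ≤ a / δ ^ 2 := by
  calc lorentzian a r ≤ lorentzian a δ := lorentzian_le_of_abs_le ha (by rwa [abs_of_pos hδ])
    _ ≤ a / δ ^ 2 := div_le_div_of_nonneg_left ha.le (by positivity) (by nlinarith)

lemma lorentzian_add_sq_le {a s t : ℝ} (ha : 0 < a) (hs : 0 ≤ s) (ht : 0 ≤ t) :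
    lorentzian a (s + t) ^ 2 ≤ lorentzian a s * lorentzian a t := by
  have hle : ∀ {r}, 0 ≤ r → r ≤ s + t → lorentzian a (s + t) ≤ lorentzian a r := fun hr hrst =>
    lorentzian_le_of_abs_le ha (by rw [abs_of_nonneg hr, abs_of_nonneg (by linarith)]; exact hrst)
  rw [sq]
  exact mul_le_mul (hle hs (by linarith)) (hle ht (by linarith)) (lorentzian_nonneg ha.le _)
    (lorentzian_nonneg ha.le _)

lemma integral_lorentzian {a : ℝ} (ha : 0 < a) (c : ℝ) :
    ∫ r in (0 : ℝ)..c, lorentzian a r = arctan (c / a) := by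
  have h : ∀ r, lorentzian a r = a⁻¹ * (1 / (1 + (r / a) ^ 2)) := fun r => by
    unfold lorentzian; field_simp
  simp_rw [h]
  rw [intervalIntegral.integral_const_mul, intervalIntegral.integral_comp_div
    (fun y => 1 / (1 + y ^ 2)) ha.ne', integral_one_div_one_add_sq]
  simp [smul_eq_mul, ha.ne']

lemma integral_lorentzian_add_lorentzian_pi_sub {a : ℝ} (ha : 0 < a) :
    ∫ r in (0 : ℝ)..π, (lorentzian a r + lorentzian a (π - r)) = 2 * arctan (π / a) := by
  have hc := continuous_lorentzian ha.ne'
  have hreflect : ∫ r in (0 : ℝ)..π, lorentzian a (π - r) = ∫ r in (0 : ℝ)..π, lorentzian a r := by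
    rw [intervalIntegral.integral_comp_sub_left (lorentzian a), sub_self, sub_zero]
  rw [intervalIntegral.integral_add (f := lorentzian a) (g := fun r => lorentzian a (π - r))
    (hc.intervalIntegrable _ _)
    ((hc.comp (continuous_sub_left π)).intervalIntegrable _ _), hreflect, integral_lorentzian ha]
  ring

lemma abs_P2_add_le {x s t : ℝ} (hx : 1 / 2 ≤ x) (hx1 : x < 1) (hs : s ∈ Set.Icc 0 π)
    (ht : t ∈ Set.Icc 0 π) :
    |P2 x (s + t)| ≤ (π ^ 3 + 2 * π ^ 5) *
      ((lorentzian (1 - x) s + lorentzian (1 - x) (π - s)) *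
        (lorentzian (1 - x) t + lorentzian (1 - x) (π - t))) := by
  obtain ⟨hs0, hsπ⟩ := hs
  obtain ⟨ht0, htπ⟩ := ht
  have ha : 0 < 1 - x := by linarith
  have hL := lorentzian_nonneg ha.le
  rcases le_total (s + t) π with hst | hst
  · calc |P2 x (s + t)| ≤ (π ^ 3 + 2 * π ^ 5) * lorentzian (1 - x) (s + t) ^ 2 :=
          abs_P2_le hx hx1 (by rw [abs_of_nonneg (by linarith)]; exact hst)
      _ ≤ (π ^ 3 + 2 * π ^ 5) * (lorentzian (1 - x) s * lorentzian (1 - x) t) := by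
          gcongr; exact lorentzian_add_sq_le ha hs0 ht0
      _ ≤ _ := by
          gcongr <;> linarith [hL s, hL t, hL (π - s), hL (π - t)]
  · have hreflect : s + t - 2 * π = -((π - s) + (π - t)) := by ring
    calc |P2 x (s + t)| = |P2 x (s + t - 2 * π)| := by rw [P2_sub_two_pi]
      _ ≤ (π ^ 3 + 2 * π ^ 5) * lorentzian (1 - x) ((π - s) + (π - t)) ^ 2 := by
          rw [← lorentzian_neg, ← hreflect]
          exact abs_P2_le hx hx1 (by rw [hreflect, abs_neg, abs_of_nonneg (by linarith)]; linarith)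
      _ ≤ (π ^ 3 + 2 * π ^ 5) * (lorentzian (1 - x) (π - s) * lorentzian (1 - x) (π - t)) := by
          gcongr; exact lorentzian_add_sq_le ha (by linarith) (by linarith)
      _ ≤ _ := by
          gcongr <;> linarith [hL s, hL t, hL (π - s), hL (π - t)]

lemma abs_P2_le_of_mem_Icc {x u δ : ℝ} (hx : 1 / 2 ≤ x) (hx1 : x < 1) (hδ : 0 < δ)
    (hu : u ∈ Set.Icc δ (2 * π - δ)) :
    |P2 x u| ≤ (π ^ 3 + 2 * π ^ 5) * ((1 - x) / δ ^ 2) ^ 2 := by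
  have ha : 0 < 1 - x := by linarith
  obtain ⟨v, hv, hPv, hδv⟩ : ∃ v, |v| ≤ π ∧ P2 x u = P2 x v ∧ δ ≤ |v| := by
    rcases le_total u π with huπ | huπ
    · exact ⟨u, by rw [abs_of_nonneg (by linarith [hu.1])]; exact huπ, rfl,
        by rw [abs_of_nonneg (by linarith [hu.1])]; exact hu.1⟩
    · refine ⟨u - 2 * π, ?_, (P2_sub_two_pi x u).symm, ?_⟩ <;>
        rw [abs_of_nonpos (by linarith [hu.2])] <;> linarith [hu.2]
  rw [hPv]
  refine (abs_P2_le hx hx1 hv).trans ?_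
  gcongr
  · exact lorentzian_nonneg ha.le v
  · exact lorentzian_le_of_le_abs ha hδ hδv

lemma abs_intervalIntegral_le_mul_add {f g : ℝ → ℝ} {a b c K : ℝ} (hab : a ≤ b)
    (hf : IntervalIntegrable f volume a b) (hg : IntervalIntegrable g volume a b)
    (h : ∀ t ∈ Set.Icc a b, |f t| ≤ c * g t + K) :
    |∫ t in a..b, f t| ≤ c * (∫ t in a..b, g t) + K * (b - a) := by
  have hg' : IntervalIntegrable (fun t => c * g t) volume a b := hg.const_mul c
  calc |∫ t in a..b, f t| ≤ ∫ t in a..b, |f t| := abs_integral_le_integral_abs hab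
    _ ≤ ∫ t in a..b, (c * g t + K) :=
        integral_mono_on hab hf.abs (hg'.add intervalIntegrable_const) h
    _ = c * (∫ t in a..b, g t) + K * (b - a) := by
        rw [integral_add hg' intervalIntegrable_const, intervalIntegral.integral_const_mul,
          intervalIntegral.integral_const, smul_eq_mul]
        ring

lemma abs_integral_integral_le_mul_add {F : ℝ → ℝ → ℝ} {g : ℝ → ℝ} {a b c K : ℝ} (hab : a ≤ b)
    (hF : Continuous (Function.uncurry F)) (hg : Continuous g)
    (h : ∀ s ∈ Set.Icc a b, ∀ t ∈ Set.Icc a b, |F s t| ≤ c * (g s * g t) + K) :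
    |∫ s in a..b, ∫ t in a..b, F s t| ≤ c * (∫ t in a..b, g t) ^ 2 + K * (b - a) ^ 2 := by
  have hinner : ∀ s ∈ Set.Icc a b,
      |∫ t in a..b, F s t| ≤ (c * ∫ t in a..b, g t) * g s + K * (b - a) := fun s hs =>
    (abs_intervalIntegral_le_mul_add (c := c * g s) (K := K) hab
      ((hF.uncurry_left s).intervalIntegrable _ _)
      (hg.intervalIntegrable _ _) fun t ht => (h s hs t ht).trans_eq (by ring)).trans_eq
      (by ring)
  exact (abs_intervalIntegral_le_mul_add hab
    ((continuous_parametric_intervalIntegral_of_continuous' hF a b).intervalIntegrable _ _)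
    (hg.intervalIntegrable _ _) hinner).trans_eq (by ring)

lemma abs_integral_integral_mul_P2_le {f : ℝ → ℝ → ℝ} (hf : Continuous (Function.uncurry f))
    {x B η δ : ℝ} (hx : 1 / 2 ≤ x) (hx1 : x < 1) (hδ : 0 < δ)
    (hB : ∀ s ∈ Set.Icc 0 π, ∀ t ∈ Set.Icc 0 π, |f s t| ≤ B)
    (hη : ∀ s ∈ Set.Icc 0 π, ∀ t ∈ Set.Icc 0 π, s + t < δ ∨ 2 * π - δ < s + t → |f s t| ≤ η) :
    |∫ s in (0 : ℝ)..π, ∫ t in (0 : ℝ)..π, f s t * P2 x (s + t)|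
      ≤ (π ^ 3 + 2 * π ^ 5) * π ^ 2 * (η + B * ((1 - x) / δ ^ 2) ^ 2) := by
  set C := π ^ 3 + 2 * π ^ 5
  set a := 1 - x
  have ha : 0 < a := by linarith
  have h0mem : (0 : ℝ) ∈ Set.Icc 0 π := ⟨le_rfl, pi_pos.le⟩
  have hη0 : 0 ≤ η := (abs_nonneg _).trans (hη 0 h0mem 0 h0mem (Or.inl (by simpa using hδ)))
  have hB0 : 0 ≤ B := (abs_nonneg _).trans (hB 0 h0mem 0 h0mem)
  set g := fun r => lorentzian a r + lorentzian a (π - r)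
  have hg0 : ∀ r, 0 ≤ g r := fun r =>
    add_nonneg (lorentzian_nonneg ha.le _) (lorentzian_nonneg ha.le _)
  have hg : Continuous g :=
    (continuous_lorentzian ha.ne').add ((continuous_lorentzian ha.ne').comp (continuous_sub_left π))
  have hpt : ∀ s ∈ Set.Icc 0 π, ∀ t ∈ Set.Icc 0 π,
      |f s t * P2 x (s + t)| ≤ C * η * (g s * g t) + C * B * (a / δ ^ 2) ^ 2 := by
    intro s hs t ht
    have hgg : 0 ≤ C * η * (g s * g t) := by have := hg0 s; have := hg0 t; positivity
    have hfar : 0 ≤ C * B * (a / δ ^ 2) ^ 2 := by positivity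
    rw [abs_mul]
    by_cases hcorner : s + t < δ ∨ 2 * π - δ < s + t
    · calc |f s t| * |P2 x (s + t)| ≤ η * (C * (g s * g t)) :=
            mul_le_mul (hη s hs t ht hcorner) (abs_P2_add_le hx hx1 hs ht) (abs_nonneg _) hη0
        _ ≤ C * η * (g s * g t) + C * B * (a / δ ^ 2) ^ 2 := by linarith
    · rw [not_or, not_lt, not_lt] at hcorner
      calc |f s t| * |P2 x (s + t)| ≤ B * (C * (a / δ ^ 2) ^ 2) :=
            mul_le_mul (hB s hs t ht) (abs_P2_le_of_mem_Icc hx hx1 hδ hcorner) (abs_nonneg _) hB0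
        _ ≤ C * η * (g s * g t) + C * B * (a / δ ^ 2) ^ 2 := by linarith
  have hF : Continuous (Function.uncurry fun s t => f s t * P2 x (s + t)) :=
    hf.mul ((continuous_P2 (abs_lt.2 ⟨by linarith, hx1⟩)).comp (by fun_prop))
  have hint : ∫ r in (0 : ℝ)..π, g r = 2 * arctan (π / a) :=
    integral_lorentzian_add_lorentzian_pi_sub ha
  have hint0 : 0 ≤ ∫ r in (0 : ℝ)..π, g r := by
    rw [hint]; have := arctan_nonneg.2 (div_pos pi_pos ha).le; positivity
  have hintπ : ∫ r in (0 : ℝ)..π, g r ≤ π := by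
    rw [hint]; linarith [arctan_lt_pi_div_two (π / a)]
  calc |∫ s in (0 : ℝ)..π, ∫ t in (0 : ℝ)..π, f s t * P2 x (s + t)|
      ≤ C * η * (∫ r in (0 : ℝ)..π, g r) ^ 2 + C * B * (a / δ ^ 2) ^ 2 * (π - 0) ^ 2 :=
        abs_integral_integral_le_mul_add pi_pos.le hF hg hpt
    _ ≤ C * η * π ^ 2 + C * B * (a / δ ^ 2) ^ 2 * (π - 0) ^ 2 := by gcongr
    _ = C * π ^ 2 * (η + B * (a / δ ^ 2) ^ 2) := by ring

lemma exists_pos_forall_abs_le_of_continuousAt {f : ℝ → ℝ → ℝ} {p q ε : ℝ}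
    (hf : ContinuousAt (Function.uncurry f) (p, q)) (hpq : f p q = 0) (hε : 0 < ε) :
    ∃ δ > 0, ∀ s t, |s - p| < δ → |t - q| < δ → |f s t| ≤ ε := by
  obtain ⟨δ, hδ, h⟩ := Metric.continuousAt_iff.1 hf ε hε
  refine ⟨δ, hδ, fun s t hs ht => ?_⟩
  have hdist : dist (s, t) (p, q) < δ := by
    rw [Prod.dist_eq, Real.dist_eq, Real.dist_eq]; exact max_lt hs ht
  simpa [Function.uncurry, hpq, Real.dist_eq] using (h hdist).le

lemma exists_pos_forall_corner_abs_le {f : ℝ → ℝ → ℝ} (hf : Continuous (Function.uncurry f))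
    (h0 : f 0 0 = 0) (hπ : f π π = 0) {ε : ℝ} (hε : 0 < ε) :
    ∃ δ > 0, ∀ s ∈ Set.Icc 0 π, ∀ t ∈ Set.Icc 0 π,
      s + t < δ ∨ 2 * π - δ < s + t → |f s t| ≤ ε := by
  obtain ⟨δ₀, hδ₀, h₀⟩ := exists_pos_forall_abs_le_of_continuousAt hf.continuousAt h0 hε
  obtain ⟨δπ, hδπ, hπ⟩ := exists_pos_forall_abs_le_of_continuousAt hf.continuousAt hπ hε
  refine ⟨min δ₀ δπ, lt_min hδ₀ hδπ, fun s ⟨hs0, hsπ⟩ t ⟨ht0, htπ⟩ hcorner => ?_⟩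
  have h₀' := min_le_left δ₀ δπ
  have hπ' := min_le_right δ₀ δπ
  rcases hcorner with hst | hst
  · exact h₀ s t (by rw [sub_zero, abs_lt]; constructor <;> linarith)
      (by rw [sub_zero, abs_lt]; constructor <;> linarith)
  · exact hπ s t (by rw [abs_lt]; constructor <;> linarith)
      (by rw [abs_lt]; constructor <;> linarith)

theorem tendsto_integral_integral_mul_P2 {f : ℝ → ℝ → ℝ} (hf : Continuous (Function.uncurry f))
    (h0 : f 0 0 = 0) (hπ : f π π = 0) :
    Tendsto (fun x => ∫ s in (0 : ℝ)..π, ∫ t in (0 : ℝ)..π, f s t * P2 x (s + t))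
      (𝓝[<] 1) (𝓝 0) := by
  obtain ⟨B, hB⟩ := (isCompact_Icc.prod isCompact_Icc).exists_bound_of_continuousOn
    (hf.continuousOn (s := Set.Icc 0 π ×ˢ Set.Icc 0 π))
  set C := (π ^ 3 + 2 * π ^ 5) * π ^ 2
  have hC : 0 < C := by positivity
  rw [Metric.tendsto_nhds]
  intro ε hε
  obtain ⟨δ, hδ, hη⟩ := exists_pos_forall_corner_abs_le hf h0 hπ (by positivity : 0 < ε / (2 * C))
  have hfar : Tendsto (fun x : ℝ => C * (ε / (2 * C) + B * ((1 - x) / δ ^ 2) ^ 2))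
      (𝓝[<] 1) (𝓝 (ε / 2)) := by
    have hcont : Continuous fun x : ℝ => C * (ε / (2 * C) + B * ((1 - x) / δ ^ 2) ^ 2) := by
      fun_prop
    convert (hcont.tendsto 1).mono_left nhdsWithin_le_nhds using 2
    field_simp
    ring
  have hnear : ∀ᶠ x in 𝓝[<] (1 : ℝ), 1 / 2 ≤ x ∧ x < 1 :=
    eventually_of_mem (Ioo_mem_nhdsLT (by norm_num : (1 / 2 : ℝ) < 1)) fun x hx => ⟨hx.1.le, hx.2⟩
  filter_upwards [hfar.eventually (gt_mem_nhds (half_lt_self hε)), hnear] with x hlt ⟨hx, hx1⟩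
  rw [Real.dist_eq, sub_zero]
  exact (abs_integral_integral_mul_P2_le hf hx hx1 hδ
    (fun s hs t ht => by simpa using hB (s, t) ⟨hs, ht⟩) hη).trans_lt hlt

theorem K1_tendsto_zero_general (T : ℝ) (hT : 0 < T) (φ : ℝ → ℝ)
    (hφc : ContinuousOn φ (Set.Icc 0 T)) :
    Tendsto (fun x => (π / (4 * T)) *
        ∫ s in (0 : ℝ)..π, ∫ t in (0 : ℝ)..π,
          (φ (T * s / π) - φ (T * t / π)) ^ 2 * P2 x (s + t))
      (nhdsWithin 1 (Set.Iio 1)) (𝓝 0) := by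
  set ψ := Set.IccExtend hT.le ((Set.Icc 0 T).domRestrict φ)
  have hψ : Continuous ψ := hφc.domRestrict.Icc_extend'
  have hψφ : ∀ r ∈ Set.uIcc 0 π, ψ (T * r / π) = φ (T * r / π) := by
    intro r hr
    rw [Set.uIcc_of_le pi_pos.le] at hr
    refine Set.IccExtend_of_mem _ _ ⟨by have := hr.1; positivity, ?_⟩
    rw [div_le_iff₀ pi_pos]
    exact mul_le_mul_of_nonneg_left hr.2 hT.le
  have hK : ∀ x, (∫ s in (0 : ℝ)..π, ∫ t in (0 : ℝ)..π,
      (ψ (T * s / π) - ψ (T * t / π)) ^ 2 * P2 x (s + t)) =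
      ∫ s in (0 : ℝ)..π, ∫ t in (0 : ℝ)..π,
        (φ (T * s / π) - φ (T * t / π)) ^ 2 * P2 x (s + t) := fun x =>
    integral_congr fun s hs => integral_congr fun t ht => by
      simp only [hψφ s hs, hψφ t ht]
  have hlim := (tendsto_integral_integral_mul_P2
    (f := fun s t => (ψ (T * s / π) - ψ (T * t / π)) ^ 2) (by fun_prop) (by simp)
    (by simp)).const_mul (π / (4 * T))
  rw [mul_zero] at hlim
  exact hlim.congr fun x => by rw [hK]

/-- The term
`K₁(x) = (π/(4T)) ∫₀^π ∫₀^π |φ(Ts/π) - φ(Tt/π)|² P₂(x, s+t) ds dt` tends to `0`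
as `x → 1⁻` for every `φ ∈ C₀[0,T]`. -/
theorem K1_tendsto_zero (T : ℝ) (hT : 0 < T) (φ : ℝ → ℝ)
    (hφc : ContinuousOn φ (Set.Icc 0 T)) (hφ0 : φ 0 = 0) :
    Tendsto (fun x => (π / (4 * T)) *
        ∫ s in (0 : ℝ)..π, ∫ t in (0 : ℝ)..π,
          (φ (T * s / π) - φ (T * t / π)) ^ 2 * P2 x (s + t))
      (nhdsWithin 1 (Set.Iio 1)) (𝓝 0) :=
  K1_tendsto_zero_general T hT φ hφc
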